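/- For every w ∈ W, the element w is the unique element of minimal length in the set {u ∈ W : u·e_w is dominant}. In particular, the map W → X sending v to the Steinberg weight e_v is injective. -/

import Mathlib

open scoped InnerProductSpace Classical

noncomputable section

/-- A reduced crystallographic root system `Φ` spanning a finite-dimensional real inner
product space `V`, together with a choice of simple roots `π` (determining the positive
system), the corresponding fundamental weights `ω`, the reflections `s`, the Weyl group
`W` and the weight lattice `X`. -/
structure RootSystemData (V : Type) [NormedAddCommGroup V] [InnerProductSpace ℝ V]
    [FiniteDimensional ℝ V] where
  /-- the (finite) set of roots -/
  Φ : Finset V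
  /-- the rank -/
  r : ℕ
  /-- the simple roots `α₁, …, α_r` -/
  π : Fin r → V
  /-- the fundamental weights `ω₁, …, ω_r` -/
  ω : Fin r → V
  /-- the orthogonal reflection attached to a root -/
  s : V → (V ≃ₗ[ℝ] V)
  /-- the Weyl group -/
  W : Subgroup (V ≃ₗ[ℝ] V)
  /-- the weight lattice -/
  X : AddSubgroup V
  root_ne_zero : ∀ α ∈ Φ, α ≠ (0 : V)
  root_span : Submodule.span ℝ (Φ : Set V) = ⊤
  reduced : ∀ α ∈ Φ, ∀ c : ℝ, c • α ∈ Φ → c = 1 ∨ c = -1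
  crystallographic : ∀ α ∈ Φ, ∀ β ∈ Φ, ∃ n : ℤ, 2 * ⟪β, α⟫_ℝ / ⟪α, α⟫_ℝ = (n : ℝ)
  s_apply : ∀ α ∈ Φ, ∀ v : V, s α v = v - (2 * ⟪v, α⟫_ℝ / ⟪α, α⟫_ℝ) • α
  refl_stable : ∀ α ∈ Φ, ∀ β ∈ Φ, s α β ∈ Φ
  W_eq : W = Subgroup.closure {g : V ≃ₗ[ℝ] V | ∃ α ∈ Φ, g = s α}
  inner_invariant : ∀ g ∈ W, ∀ u v : V, ⟪g u, g v⟫_ℝ = ⟪u, v⟫_ℝ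
  simple_mem : ∀ i, π i ∈ Φ
  simple_indep : LinearIndependent ℝ π
  pos_or_neg : ∀ α ∈ Φ,
      (∃ c : Fin r → ℝ, (∀ i, 0 ≤ c i) ∧ α = ∑ i, c i • π i) ∨
      (∃ c : Fin r → ℝ, (∀ i, 0 ≤ c i) ∧ -α = ∑ i, c i • π i)
  fund : ∀ i j, 2 * ⟪ω i, π j⟫_ℝ / ⟪π j, π j⟫_ℝ = if i = j then (1 : ℝ) else 0
  X_eq : X = AddSubgroup.closure (Set.range ω)
  X_stable : ∀ g ∈ W, ∀ x ∈ X, g x ∈ X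

/-- The pairing `(v, α∨) = 2(v,α)/(α,α)` of a vector with the coroot of `α`. -/
def pairing {V : Type} [NormedAddCommGroup V] [InnerProductSpace ℝ V]
    (v α : V) : ℝ := 2 * ⟪v, α⟫_ℝ / ⟪α, α⟫_ℝ

namespace RootSystemData

variable {V : Type} [NormedAddCommGroup V] [InnerProductSpace ℝ V] [FiniteDimensional ℝ V]
variable (C : RootSystemData V)

/-- `α` is a nonnegative combination of the simple roots (a positive root, if `α ∈ Φ`). -/
def IsPos (α : V) : Prop := ∃ c : Fin C.r → ℝ, (∀ i, 0 ≤ c i) ∧ α = ∑ i, c i • C.π i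

/-- `α` is a nonpositive combination of the simple roots (a negative root, if `α ∈ Φ`). -/
def IsNeg (α : V) : Prop := C.IsPos (-α)

/-- A weight is dominant if it pairs nonnegatively with all simple coroots. -/
def IsDominant (lam : V) : Prop := ∀ i, 0 ≤ pairing lam (C.π i)

/-- The product of the simple reflections along a word. -/
def wordProd (l : List (Fin C.r)) : V ≃ₗ[ℝ] V := (l.map fun i => C.s (C.π i)).prod

/-- The length of `w`: the least length of an expression of `w` as a product of
simple reflections. -/
def length (w : V ≃ₗ[ℝ] V) : ℕ :=
  sInf {n | ∃ l : List (Fin C.r), l.length = n ∧ C.wordProd l = w}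

/-- The (strong) Bruhat order on the Weyl group: `u ≤ v` iff `v` is obtained from `u`
by successively multiplying by reflections, increasing the length at each step. -/
def BruhatLE (u v : V ≃ₗ[ℝ] V) : Prop :=
  Relation.ReflTransGen
    (fun a b => (∃ α ∈ C.Φ, b = a * C.s α) ∧ C.length a < C.length b) u v

/-- The Steinberg weight `e_v = v⁻¹ ⬝ ∑_{i : v⁻¹ α_i < 0} ω_i`. -/
def steinberg (v : V ≃ₗ[ℝ] V) : V :=
  v⁻¹ (∑ i ∈ Finset.univ.filter (fun i => C.IsNeg (v⁻¹ (C.π i))), C.ω i)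

/-- The excellent order on weights: `λ ≤ₑ μ` iff `(λ,λ) < (μ,μ)`, or `λ = wν`, `μ = zν`
for some dominant `ν ∈ X` and `w ≤ z` in the Bruhat order. -/
def ExcLE (lam mu : V) : Prop :=
  ⟪lam, lam⟫_ℝ < ⟪mu, mu⟫_ℝ ∨
    ∃ nu ∈ C.X, C.IsDominant nu ∧
      ∃ w ∈ C.W, ∃ z ∈ C.W, C.BruhatLE w z ∧ lam = w nu ∧ mu = z nu

/-- The strict excellent order. -/
def ExcLT (lam mu : V) : Prop := C.ExcLE lam mu ∧ lam ≠ mu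

/-- The antipodal excellent order: `λ ≤ₐ μ` iff `-λ ≤ₑ -μ`. -/
def AntiLE (lam mu : V) : Prop := C.ExcLE (-lam) (-mu)

/-- The strict antipodal excellent order. -/
def AntiLT (lam mu : V) : Prop := C.AntiLE lam mu ∧ lam ≠ mu

/-- The dominance order: `μ ≤_d ν` iff `ν - μ` is a nonnegative integer combination of
the positive roots. -/
def DomLE (mu nu : V) : Prop :=
  ∃ c : V → ℕ, nu - mu = ∑ α ∈ C.Φ.filter (fun a => C.IsPos a), (c α : ℝ) • α

theorem omega_mem (i : Fin C.r) : C.ω i ∈ C.X := by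
  rw [C.X_eq]; exact AddSubgroup.subset_closure ⟨i, rfl⟩

theorem steinberg_mem {v : V ≃ₗ[ℝ] V} (hv : v ∈ C.W) : C.steinberg v ∈ C.X :=
  C.X_stable _ (inv_mem hv) _ (AddSubgroup.sum_mem _ fun i _ => C.omega_mem i)

/-- The group ring `ℤ[X]` of the weight lattice. -/
abbrev GroupRing := AddMonoidAlgebra ℤ ↥C.X

/-- The basis element `e^λ` of `ℤ[X]`. -/
def expo (x : V) (hx : x ∈ C.X) : C.GroupRing := AddMonoidAlgebra.single ⟨x, hx⟩ 1

/-- `e^λ`, defined for all `λ : V` (and zero off the lattice). -/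
def expoOf (x : V) : C.GroupRing := if hx : x ∈ C.X then C.expo x hx else 0

/-- The coefficient of `e^x` in an element of `ℤ[X]`. -/
def coeff (m : C.GroupRing) (x : ↥C.X) : ℤ := (AddMonoidAlgebra.coeff m : ↥C.X →₀ ℤ) x

/-- The support of an element of `ℤ[X]`. -/
def supp (m : C.GroupRing) : Finset ↥C.X := (AddMonoidAlgebra.coeff m : ↥C.X →₀ ℤ).support

/-- The action of `g ∈ W` on the weight lattice. -/
def actX (g : V ≃ₗ[ℝ] V) (hg : g ∈ C.W) : ↥C.X → ↥C.X :=
  fun x => ⟨g x, C.X_stable g hg x.1 x.2⟩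

/-- The action of `g ∈ W` on `ℤ[X]`, with `e^λ ↦ e^{gλ}`. -/
def wAct (g : V ≃ₗ[ℝ] V) (hg : g ∈ C.W) (m : C.GroupRing) : C.GroupRing :=
  AddMonoidAlgebra.ofCoeff (Finsupp.mapDomain (C.actX g hg) (AddMonoidAlgebra.coeff m))

/-- `m` lies in the invariant subring `ℤ[X]^W`. -/
def IsWInvariant (m : C.GroupRing) : Prop := ∀ g (hg : g ∈ C.W), C.wAct g hg m = m

/-- The parabolic subgroup `W_{Π'}` generated by the simple reflections `s_α, α ∈ Π'`,
for a subset `Π'` of the simple roots (given by a subset `J` of the index set). -/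
def parabolicSubgroup (J : Set (Fin C.r)) : Subgroup (V ≃ₗ[ℝ] V) :=
  Subgroup.closure {g | ∃ i ∈ J, g = C.s (C.π i)}

theorem parabolic_le (J : Set (Fin C.r)) : C.parabolicSubgroup J ≤ C.W := by
  refine (Subgroup.closure_le _).2 ?_
  rintro g ⟨i, _, rfl⟩
  rw [C.W_eq]
  exact Subgroup.subset_closure ⟨C.π i, C.simple_mem i, rfl⟩

/-- `m` lies in the invariant subring `ℤ[X]^H` for a subgroup `H ≤ W`. -/
def IsInvariantUnder (H : Subgroup (V ≃ₗ[ℝ] V)) (hH : H ≤ C.W) (m : C.GroupRing) : Prop :=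
  ∀ g (hg : g ∈ H), C.wAct g (hH hg) m = m

/-- `v` is of minimal length in its coset `v ⬝ W_{Π'}`. -/
def IsMinCosetRep (J : Set (Fin C.r)) (v : V ≃ₗ[ℝ] V) : Prop :=
  v ∈ C.W ∧ ∀ z ∈ C.parabolicSubgroup J, C.length v ≤ C.length (v * z)

/-- The subgroup generated by the simple reflections fixing a given vector. -/
def fixSubgroup (x : V) : Subgroup (V ≃ₗ[ℝ] V) :=
  Subgroup.closure {g | ∃ i : Fin C.r, C.s (C.π i) x = x ∧ g = C.s (C.π i)}

end RootSystemData

/-! Put `λ_w = ∑_{i ∈ D(w)} ωᵢ` with `D(w) = {i : w⁻¹αᵢ < 0}`, so that `w e_w = λ_w` is dominant.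
For every inversion `α` of `w` (`α > 0`, `wα < 0`) one has `(e_w, α) < 0`. Hence, if `u e_w` is
dominant, `(u e_w, uα) = (e_w, α) < 0` forces `uα < 0`: the inversion set of `w` is contained in
that of `u`. As the length is the number of inversions and an element of `W` is determined by its
inversion set, `ℓ(w) ≤ ℓ(u)`, with equality only for `u = w`. Injectivity of `v ↦ e_v` follows by
comparing `v` and `w` in both directions. -/

namespace RootSystemData

variable {V : Type} [NormedAddCommGroup V] [InnerProductSpace ℝ V] [FiniteDimensional ℝ V]
variable (C : RootSystemData V)

theorem inner_self_pos_of_mem {α : V} (hα : α ∈ C.Φ) : 0 < ⟪α, α⟫_ℝ :=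
  real_inner_self_pos.2 (C.root_ne_zero α hα)

theorem isPos_or_isNeg {α : V} (hα : α ∈ C.Φ) : C.IsPos α ∨ C.IsNeg α := C.pos_or_neg α hα

@[simp]
theorem isNeg_neg {α : V} : C.IsNeg (-α) ↔ C.IsPos α := by
  rw [IsNeg, neg_neg]

theorem pairing_pos_iff {v α : V} (hα : α ∈ C.Φ) : 0 < pairing v α ↔ 0 < ⟪v, α⟫_ℝ := by
  rw [pairing, mul_div_assoc, mul_pos_iff_of_pos_left two_pos,
    div_pos_iff_of_pos_right (C.inner_self_pos_of_mem hα)]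

theorem pairing_nonneg_iff {v α : V} (hα : α ∈ C.Φ) : 0 ≤ pairing v α ↔ 0 ≤ ⟪v, α⟫_ℝ := by
  rw [pairing, mul_div_assoc, mul_nonneg_iff_of_pos_left two_pos,
    le_div_iff₀ (C.inner_self_pos_of_mem hα), zero_mul]

section SimpleBasis

theorem span_range_π : Submodule.span ℝ (Set.range C.π) = ⊤ := by
  refine eq_top_iff.2 (C.root_span ▸ Submodule.span_le.2 fun α hα => ?_)
  have hmem (c : Fin C.r → ℝ) : ∑ i, c i • C.π i ∈ Submodule.span ℝ (Set.range C.π) :=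
    Submodule.sum_mem _ fun i _ => Submodule.smul_mem _ _ (Submodule.subset_span ⟨i, rfl⟩)
  rcases C.isPos_or_isNeg hα with ⟨c, -, hc⟩ | ⟨c, -, hc⟩
  · exact hc ▸ hmem c
  · rw [← neg_neg α, hc]
    exact Submodule.neg_mem _ (hmem c)

def simpleBasis : Module.Basis (Fin C.r) ℝ V :=
  Module.Basis.mk C.simple_indep C.span_range_π.ge

@[simp]
theorem simpleBasis_apply (i : Fin C.r) : C.simpleBasis i = C.π i :=
  Module.Basis.mk_apply _ _ i

theorem sum_repr_smul_π (α : V) : ∑ j, C.simpleBasis.repr α j • C.π j = α := by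
  simpa using C.simpleBasis.sum_repr α

theorem repr_π (i j : Fin C.r) : C.simpleBasis.repr (C.π i) j = if i = j then 1 else 0 := by
  rw [← C.simpleBasis_apply, Module.Basis.repr_self, Finsupp.single_apply]

theorem isPos_iff (α : V) : C.IsPos α ↔ ∀ j, 0 ≤ C.simpleBasis.repr α j := by
  refine ⟨?_, fun h => ⟨_, h, (C.sum_repr_smul_π α).symm⟩⟩
  rintro ⟨c, hc, rfl⟩ j
  simp_rw [← C.simpleBasis_apply, Module.Basis.repr_sum_self]
  exact hc j

theorem isNeg_iff (α : V) : C.IsNeg α ↔ ∀ j, C.simpleBasis.repr α j ≤ 0 := by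
  simp [IsNeg, isPos_iff]

theorem isPos_π (i : Fin C.r) : C.IsPos (C.π i) := by
  rw [isPos_iff]
  intro j
  rw [repr_π]
  split_ifs <;> norm_num

theorem isPos_zero : C.IsPos 0 :=
  ⟨0, fun _ => le_rfl, by simp⟩

theorem isPos_sum {ι : Type*} (s : Finset ι) (f : ι → V) (hf : ∀ j ∈ s, C.IsPos (f j)) :
    C.IsPos (∑ j ∈ s, f j) := by
  simp only [isPos_iff, map_sum, Finsupp.coe_finsetSum, Finset.sum_apply] at hf ⊢
  exact fun k => Finset.sum_nonneg fun j hj => hf j hj k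

theorem isPos_smul {α : V} (h : C.IsPos α) {c : ℝ} (hc : 0 ≤ c) : C.IsPos (c • α) := by
  rw [isPos_iff] at h ⊢
  intro j
  simpa using mul_nonneg hc (h j)

theorem not_isNeg_of_isPos {α : V} (hα : α ∈ C.Φ) (h : C.IsPos α) : ¬ C.IsNeg α := by
  intro h'
  rw [isPos_iff] at h
  rw [isNeg_iff] at h'
  refine C.root_ne_zero α hα (C.simpleBasis.repr.map_eq_zero_iff.1 ?_)
  ext j
  exact le_antisymm (h' j) (h j)

theorem inner_eq_sum_repr (v γ : V) :
    ⟪v, γ⟫_ℝ = ∑ j, C.simpleBasis.repr γ j * ⟪v, C.π j⟫_ℝ := by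
  conv_lhs => rw [← C.sum_repr_smul_π γ]
  simp only [inner_sum, real_inner_smul_right]

end SimpleBasis

section Reflections

theorem s_self {α : V} (hα : α ∈ C.Φ) : C.s α α = -α := by
  rw [C.s_apply α hα, mul_div_assoc, div_self (C.inner_self_pos_of_mem hα).ne', mul_one,
    two_smul, sub_add_cancel_left]

theorem neg_mem {α : V} (hα : α ∈ C.Φ) : -α ∈ C.Φ :=
  C.s_self hα ▸ C.refl_stable α hα α hα

theorem s_neg {α : V} (hα : α ∈ C.Φ) : C.s (-α) = C.s α := by
  ext v
  simp only [C.s_apply _ (C.neg_mem hα), C.s_apply _ hα, inner_neg_right, inner_neg_left,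
    neg_smul, smul_neg, mul_neg, neg_div, neg_neg]

theorem s_s {α : V} (hα : α ∈ C.Φ) (v : V) : C.s α (C.s α v) = v := by
  have h0 := (C.inner_self_pos_of_mem hα).ne'
  rw [C.s_apply α hα v, C.s_apply α hα, inner_sub_left, real_inner_smul_left]
  match_scalars
  · rfl
  · field_simp
    ring

theorem s_mul_self {α : V} (hα : α ∈ C.Φ) : C.s α * C.s α = 1 :=
  LinearEquiv.ext (C.s_s hα)

theorem s_inv {α : V} (hα : α ∈ C.Φ) : (C.s α)⁻¹ = C.s α :=
  inv_eq_of_mul_eq_one_right (C.s_mul_self hα)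

theorem s_mem_W {α : V} (hα : α ∈ C.Φ) : C.s α ∈ C.W := by
  rw [C.W_eq]
  exact Subgroup.subset_closure ⟨α, hα, rfl⟩

theorem apply_mem {g : V ≃ₗ[ℝ] V} (hg : g ∈ C.W) {α : V} (hα : α ∈ C.Φ) : g α ∈ C.Φ := by
  rw [C.W_eq] at hg
  induction hg using Subgroup.closure_induction'' generalizing α with
  | mem x hx =>
    obtain ⟨β, hβ, rfl⟩ := hx
    exact C.refl_stable β hβ α hα
  | inv_mem x hx =>
    obtain ⟨β, hβ, rfl⟩ := hx
    exact C.s_inv hβ ▸ C.refl_stable β hβ α hα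
  | one => exact hα
  | mul x y _ _ ihx ihy => exact ihx (ihy hα)

theorem mul_s_mul_inv {g : V ≃ₗ[ℝ] V} (hg : g ∈ C.W) {α : V} (hα : α ∈ C.Φ) :
    g * C.s α * g⁻¹ = C.s (g α) := by
  ext v
  have hinv : ⟪g⁻¹ v, α⟫_ℝ = ⟪v, g α⟫_ℝ := by
    rw [← C.inner_invariant g hg, LinearEquiv.coe_inv, LinearEquiv.apply_symm_apply]
  simp only [LinearEquiv.mul_apply, C.s_apply α hα, C.s_apply _ (C.apply_mem hg hα), map_sub,
    map_smul, hinv, C.inner_invariant g hg]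
  simp

end Reflections

section PositiveRoots

theorem s_π_apply (i : Fin C.r) (v : V) : C.s (C.π i) v = v - pairing v (C.π i) • C.π i :=
  C.s_apply _ (C.simple_mem i) v

theorem repr_s_π (i j : Fin C.r) (v : V) :
    C.simpleBasis.repr (C.s (C.π i) v) j =
      C.simpleBasis.repr v j - if i = j then pairing v (C.π i) else 0 := by
  simp [s_π_apply, repr_π]

theorem isPos_s_π_of_ne {i : Fin C.r} {α : V} (hα : α ∈ C.Φ) (hpos : C.IsPos α)
    (hne : α ≠ C.π i) : C.IsPos (C.s (C.π i) α) := by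
  rw [isPos_iff] at hpos
  obtain ⟨j, hji, hj⟩ : ∃ j, j ≠ i ∧ 0 < C.simpleBasis.repr α j := by
    by_contra! h
    have hα_eq : α = C.simpleBasis.repr α i • C.π i := by
      conv_lhs => rw [← C.sum_repr_smul_π α]
      refine Finset.sum_eq_single i (fun j _ hji => ?_) (by simp)
      rw [le_antisymm (h j hji) (hpos j), zero_smul]
    rcases C.reduced _ (C.simple_mem i) _ (hα_eq ▸ hα) with h1 | h1
    · exact hne (by rw [hα_eq, h1, one_smul])
    · linarith [hpos i]
  have hsα := C.refl_stable _ (C.simple_mem i) α hα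
  refine (C.isPos_or_isNeg hsα).resolve_right fun hneg => ?_
  have := (C.isNeg_iff _).1 hneg j
  rw [repr_s_π, if_neg (Ne.symm hji), sub_zero] at this
  linarith

def height (α : V) : ℝ := ∑ j, C.simpleBasis.repr α j

theorem height_s_π (i : Fin C.r) (v : V) :
    C.height (C.s (C.π i) v) = C.height v - pairing v (C.π i) := by
  simp [height, repr_s_π, Finset.sum_sub_distrib]

theorem exists_inner_π_pos {α : V} (hα : α ∈ C.Φ) (hpos : C.IsPos α) :
    ∃ i, 0 < ⟪α, C.π i⟫_ℝ := by
  have h : ∑ _j : Fin C.r, (0 : ℝ) < ∑ j, C.simpleBasis.repr α j * ⟪α, C.π j⟫_ℝ := by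
    rw [← C.inner_eq_sum_repr, Finset.sum_const_zero]
    exact C.inner_self_pos_of_mem hα
  obtain ⟨i, -, hi⟩ := Finset.exists_lt_of_sum_lt h
  exact ⟨i, pos_of_mul_pos_right hi ((C.isPos_iff α).1 hpos i)⟩

end PositiveRoots

section Words

theorem wordProd_cons (i : Fin C.r) (l : List (Fin C.r)) :
    C.wordProd (i :: l) = C.s (C.π i) * C.wordProd l := by
  simp [wordProd]

theorem wordProd_append (l l' : List (Fin C.r)) :
    C.wordProd (l ++ l') = C.wordProd l * C.wordProd l' := by
  simp [wordProd]

theorem wordProd_singleton (i : Fin C.r) : C.wordProd [i] = C.s (C.π i) := by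
  simp [wordProd]

theorem wordProd_mem_W (l : List (Fin C.r)) : C.wordProd l ∈ C.W := by
  induction l with
  | nil => exact one_mem _
  | cons i l ih => exact C.wordProd_cons i l ▸ mul_mem (C.s_mem_W (C.simple_mem i)) ih

/-- A positive root that is not simple is `s_i β` for a positive root `β` of smaller height,
so that `s_α = s_i s_β s_i`. -/
theorem exists_wordProd_eq_s_of_isPos {α : V} (hα : α ∈ C.Φ) (hpos : C.IsPos α) :
    ∃ l, C.wordProd l = C.s α := by
  induction hn : (C.Φ.filter (C.height · < C.height α)).card using Nat.strong_induction_on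
    generalizing α with
  | _ n ih =>
  by_cases hsimple : ∃ i, α = C.π i
  · obtain ⟨i, rfl⟩ := hsimple
    exact ⟨[i], C.wordProd_singleton i⟩
  push Not at hsimple
  obtain ⟨i, hi⟩ := C.exists_inner_π_pos hα hpos
  have hπ := C.simple_mem i
  set β := C.s (C.π i) α with hβ_def
  have hβ : β ∈ C.Φ := C.refl_stable _ hπ α hα
  have hlt : C.height β < C.height α := by
    rw [height_s_π]
    linarith [(C.pairing_pos_iff hπ).2 hi]
  have hcard : (C.Φ.filter (C.height · < C.height β)).card < n := by
    refine hn ▸ Finset.card_lt_card ((Finset.ssubset_iff_of_subset ?_).2 ?_)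
    · intro γ
      simp only [Finset.mem_filter]
      exact fun hγ => ⟨hγ.1, hγ.2.trans hlt⟩
    · exact ⟨β, Finset.mem_filter.2 ⟨hβ, hlt⟩, by simp⟩
  obtain ⟨l, hl⟩ := ih _ hcard hβ (C.isPos_s_π_of_ne hα hpos (hsimple i)) rfl
  refine ⟨i :: l ++ [i], ?_⟩
  rw [C.wordProd_append, C.wordProd_cons, C.wordProd_singleton, hl]
  nth_rewrite 2 [← C.s_inv hπ]
  rw [C.mul_s_mul_inv (C.s_mem_W hπ) hβ, hβ_def, C.s_s hπ]

theorem exists_wordProd_eq {g : V ≃ₗ[ℝ] V} (hg : g ∈ C.W) : ∃ l, C.wordProd l = g := by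
  have hs {α : V} (hα : α ∈ C.Φ) : ∃ l, C.wordProd l = C.s α := by
    rcases C.isPos_or_isNeg hα with h | h
    · exact C.exists_wordProd_eq_s_of_isPos hα h
    · exact C.s_neg hα ▸ C.exists_wordProd_eq_s_of_isPos (C.neg_mem hα) h
  rw [C.W_eq] at hg
  induction hg using Subgroup.closure_induction'' with
  | mem x hx =>
    obtain ⟨α, hα, rfl⟩ := hx
    exact hs hα
  | inv_mem x hx =>
    obtain ⟨α, hα, rfl⟩ := hx
    exact C.s_inv hα ▸ hs hα
  | one => exact ⟨[], rfl⟩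
  | mul x y _ _ ihx ihy =>
    obtain ⟨l, rfl⟩ := ihx
    obtain ⟨l', rfl⟩ := ihy
    exact ⟨l ++ l', C.wordProd_append l l'⟩

end Words

section Length

theorem length_wordProd_le (l : List (Fin C.r)) : C.length (C.wordProd l) ≤ l.length :=
  Nat.sInf_le ⟨l, rfl, rfl⟩

theorem exists_reduced_word {g : V ≃ₗ[ℝ] V} (hg : g ∈ C.W) :
    ∃ l : List (Fin C.r), l.length = C.length g ∧ C.wordProd l = g := by
  obtain ⟨l, hl⟩ := C.exists_wordProd_eq hg
  exact Nat.sInf_mem (s := {n | ∃ l : List (Fin C.r), l.length = n ∧ C.wordProd l = g})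
    ⟨l.length, l, rfl, hl⟩

theorem length_one : C.length 1 = 0 :=
  Nat.le_zero.1 (C.length_wordProd_le [])

theorem eq_one_of_length_eq_zero {g : V ≃ₗ[ℝ] V} (hg : g ∈ C.W) (h : C.length g = 0) :
    g = 1 := by
  obtain ⟨l, hl, rfl⟩ := C.exists_reduced_word hg
  rw [h, List.length_eq_zero_iff] at hl
  rw [hl]
  rfl

theorem length_mul_s_le {g : V ≃ₗ[ℝ] V} (hg : g ∈ C.W) (i : Fin C.r) :
    C.length (g * C.s (C.π i)) ≤ C.length g + 1 := by
  obtain ⟨l, hl, rfl⟩ := C.exists_reduced_word hg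
  simpa [← hl, C.wordProd_append, C.wordProd_singleton] using C.length_wordProd_le (l ++ [i])

theorem exists_wordProd_eq_mul_s_of_isNeg (l : List (Fin C.r)) {i : Fin C.r}
    (h : C.IsNeg (C.wordProd l (C.π i))) :
    ∃ l' : List (Fin C.r), l'.length + 1 = l.length ∧
      C.wordProd l' = C.wordProd l * C.s (C.π i) := by
  have hπ := C.simple_mem i
  induction l with
  | nil => exact absurd h (C.not_isNeg_of_isPos hπ (C.isPos_π i))
  | cons b t ih =>
    rw [C.wordProd_cons, LinearEquiv.mul_apply] at h
    by_cases ht : C.IsNeg (C.wordProd t (C.π i))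
    · obtain ⟨t', ht', hw⟩ := ih ht
      exact ⟨b :: t', by simp [ht'], by rw [C.wordProd_cons, hw, C.wordProd_cons, mul_assoc]⟩
    have htπ : C.wordProd t (C.π i) ∈ C.Φ := C.apply_mem (C.wordProd_mem_W t) hπ
    -- `s_b` makes the positive root `t α_i` negative, so it must be `α_b`
    have heq : C.wordProd t (C.π i) = C.π b := by
      by_contra hne
      exact C.not_isNeg_of_isPos (C.refl_stable _ (C.simple_mem b) _ htπ)
        (C.isPos_s_π_of_ne htπ ((C.isPos_or_isNeg htπ).resolve_right ht) hne) h
    have hconj : C.wordProd t * C.s (C.π i) * (C.wordProd t)⁻¹ = C.s (C.π b) := by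
      rw [C.mul_s_mul_inv (C.wordProd_mem_W t) hπ, heq]
    refine ⟨t, by simp, ?_⟩
    rw [C.wordProd_cons, ← hconj]
    simp [mul_assoc, C.s_mul_self hπ]

theorem length_mul_s_lt {w : V ≃ₗ[ℝ] V} (hw : w ∈ C.W) {i : Fin C.r}
    (h : C.IsNeg (w (C.π i))) : C.length (w * C.s (C.π i)) < C.length w := by
  obtain ⟨l, hl, rfl⟩ := C.exists_reduced_word hw
  obtain ⟨l', hl', hwl'⟩ := C.exists_wordProd_eq_mul_s_of_isNeg l h
  have := C.length_wordProd_le l'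
  rw [hwl'] at this
  omega

theorem exists_isNeg_apply_π {w : V ≃ₗ[ℝ] V} (hw : w ∈ C.W) (hne : w ≠ 1) :
    ∃ i, C.IsNeg (w (C.π i)) := by
  obtain ⟨l, hl, hwl⟩ := C.exists_reduced_word hw
  obtain ⟨t, i, rfl⟩ := (List.eq_nil_or_concat' l).resolve_left (by rintro rfl; exact hne hwl.symm)
  refine ⟨i, by_contra fun hpos => ?_⟩
  have hπ := C.simple_mem i
  have hws : C.wordProd t = w * C.s (C.π i) := by
    rw [← hwl, C.wordProd_append, C.wordProd_singleton, mul_assoc, C.s_mul_self hπ, mul_one]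
  have hneg : C.IsNeg ((w * C.s (C.π i)) (C.π i)) := by
    rw [LinearEquiv.mul_apply, C.s_self hπ, map_neg, isNeg_neg]
    exact (C.isPos_or_isNeg (C.apply_mem hw hπ)).resolve_right hpos
  have := C.length_mul_s_lt (mul_mem hw (C.s_mem_W hπ)) hneg
  rw [mul_assoc, C.s_mul_self hπ, mul_one, ← hws] at this
  have := C.length_wordProd_le t
  rw [List.length_append, List.length_singleton] at hl
  omega

end Length

section Inversions

def invSet (w : V ≃ₗ[ℝ] V) : Finset V :=
  C.Φ.filter fun α => C.IsPos α ∧ C.IsNeg (w α)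

theorem mem_invSet {w : V ≃ₗ[ℝ] V} {α : V} :
    α ∈ C.invSet w ↔ α ∈ C.Φ ∧ C.IsPos α ∧ C.IsNeg (w α) :=
  Finset.mem_filter

theorem invSet_one : C.invSet 1 = ∅ :=
  Finset.eq_empty_of_forall_notMem fun _ h =>
    let ⟨hα, hpos, hneg⟩ := C.mem_invSet.1 h
    C.not_isNeg_of_isPos hα hpos hneg

theorem π_mem_invSet {w : V ≃ₗ[ℝ] V} {i : Fin C.r} (h : C.IsNeg (w (C.π i))) :
    C.π i ∈ C.invSet w :=
  C.mem_invSet.2 ⟨C.simple_mem i, C.isPos_π i, h⟩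

theorem mem_invSet_mul_s_iff {w : V ≃ₗ[ℝ] V} (hw : w ∈ C.W) {i : Fin C.r}
    (h : C.IsNeg (w (C.π i))) {β : V} :
    β ∈ C.invSet (w * C.s (C.π i)) ↔ C.s (C.π i) β ∈ (C.invSet w).erase (C.π i) := by
  have hπ := C.simple_mem i
  simp only [Finset.mem_erase, mem_invSet, LinearEquiv.mul_apply]
  constructor
  · rintro ⟨hβ, hpos, hneg⟩
    have hne : β ≠ C.π i := by
      rintro rfl
      rw [C.s_self hπ, map_neg, isNeg_neg] at hneg
      exact C.not_isNeg_of_isPos (C.apply_mem hw hπ) hneg h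
    refine ⟨fun heq => C.not_isNeg_of_isPos hβ hpos ?_, C.refl_stable _ hπ _ hβ,
      C.isPos_s_π_of_ne hβ hpos hne, hneg⟩
    rw [← C.s_s hπ β, heq, C.s_self hπ, isNeg_neg]
    exact C.isPos_π i
  · rintro ⟨hne, hβ, hpos, hneg⟩
    have hβ' := C.refl_stable _ hπ _ hβ
    have hpos' := C.isPos_s_π_of_ne hβ hpos hne
    rw [C.s_s hπ] at hβ' hpos'
    exact ⟨hβ', hpos', hneg⟩

theorem card_invSet_mul_s {w : V ≃ₗ[ℝ] V} (hw : w ∈ C.W) {i : Fin C.r}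
    (h : C.IsNeg (w (C.π i))) :
    (C.invSet (w * C.s (C.π i))).card + 1 = (C.invSet w).card := by
  have hs := C.s_s (C.simple_mem i)
  have : (C.invSet (w * C.s (C.π i))).card = ((C.invSet w).erase (C.π i)).card :=
    Finset.card_nbij' (C.s (C.π i)) (C.s (C.π i))
      (fun β hβ => (C.mem_invSet_mul_s_iff hw h).1 hβ)
      (fun β hβ => (C.mem_invSet_mul_s_iff hw h).2 (by rwa [hs]))
      (fun β _ => hs β) (fun β _ => hs β)
  rw [this, Finset.card_erase_add_one (C.π_mem_invSet h)]

theorem length_eq_card_invSet {w : V ≃ₗ[ℝ] V} (hw : w ∈ C.W) :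
    C.length w = (C.invSet w).card := by
  induction hn : C.length w using Nat.strong_induction_on generalizing w with
  | _ n ih =>
  by_cases h1 : w = 1
  · subst h1
    rw [← hn, length_one, invSet_one, Finset.card_empty]
  obtain ⟨i, hi⟩ := C.exists_isNeg_apply_π hw h1
  have hπ := C.simple_mem i
  have hws : w * C.s (C.π i) ∈ C.W := mul_mem hw (C.s_mem_W hπ)
  have hle : C.length w ≤ C.length (w * C.s (C.π i)) + 1 := by
    simpa [mul_assoc, C.s_mul_self hπ] using C.length_mul_s_le hws i
  have hlt := C.length_mul_s_lt hw hi
  have := ih _ (hn ▸ hlt) hws rfl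
  have := C.card_invSet_mul_s hw hi
  omega

theorem eq_of_invSet_eq {u w : V ≃ₗ[ℝ] V} (hu : u ∈ C.W) (hw : w ∈ C.W)
    (h : C.invSet u = C.invSet w) : u = w := by
  induction hn : C.length w using Nat.strong_induction_on generalizing u w with
  | _ n ih =>
  by_cases h1 : w = 1
  · subst h1
    rw [invSet_one] at h
    exact C.eq_one_of_length_eq_zero hu (by rw [C.length_eq_card_invSet hu, h, Finset.card_empty])
  obtain ⟨i, hi⟩ := C.exists_isNeg_apply_π hw h1
  have hui : C.IsNeg (u (C.π i)) := (C.mem_invSet.1 (h ▸ C.π_mem_invSet hi)).2.2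
  have hs := C.s_mem_W (C.simple_mem i)
  have hinv : C.invSet (u * C.s (C.π i)) = C.invSet (w * C.s (C.π i)) := by
    ext β
    rw [C.mem_invSet_mul_s_iff hu hui, C.mem_invSet_mul_s_iff hw hi, h]
  exact mul_right_cancel
    (ih _ (hn ▸ C.length_mul_s_lt hw hi) (mul_mem hu hs) (mul_mem hw hs) hinv rfl)

end Inversions

section Dominance

theorem inner_π_nonneg_of_isDominant {lam : V} (h : C.IsDominant lam) (j : Fin C.r) :
    0 ≤ ⟪lam, C.π j⟫_ℝ :=
  (C.pairing_nonneg_iff (C.simple_mem j)).1 (h j)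

theorem inner_nonneg_of_isDominant_of_isPos {lam γ : V} (h : C.IsDominant lam)
    (hγ : C.IsPos γ) : 0 ≤ ⟪lam, γ⟫_ℝ := by
  rw [inner_eq_sum_repr]
  exact Finset.sum_nonneg fun j _ =>
    mul_nonneg ((C.isPos_iff γ).1 hγ j) (C.inner_π_nonneg_of_isDominant h j)

theorem inner_ω_π (i j : Fin C.r) :
    ⟪C.ω i, C.π j⟫_ℝ = if i = j then ⟪C.π j, C.π j⟫_ℝ / 2 else 0 := by
  have h := C.fund i j
  have hA := (C.inner_self_pos_of_mem (C.simple_mem j)).ne'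
  split_ifs at h ⊢ <;> field_simp at h <;> linarith

def descentWeight (w : V ≃ₗ[ℝ] V) : V :=
  ∑ i ∈ Finset.univ.filter (fun i => C.IsNeg (w⁻¹ (C.π i))), C.ω i

theorem apply_steinberg (w : V ≃ₗ[ℝ] V) : w (C.steinberg w) = C.descentWeight w :=
  w.apply_symm_apply _

theorem inner_descentWeight_π (w : V ≃ₗ[ℝ] V) (j : Fin C.r) :
    ⟪C.descentWeight w, C.π j⟫_ℝ =
      if C.IsNeg (w⁻¹ (C.π j)) then ⟪C.π j, C.π j⟫_ℝ / 2 else 0 := by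
  simp [descentWeight, sum_inner, inner_ω_π, Finset.sum_ite_eq']

theorem isDominant_descentWeight (w : V ≃ₗ[ℝ] V) : C.IsDominant (C.descentWeight w) := by
  intro j
  rw [C.pairing_nonneg_iff (C.simple_mem j), inner_descentWeight_π]
  split_ifs
  · exact half_pos (C.inner_self_pos_of_mem (C.simple_mem j)) |>.le
  · exact le_rfl

theorem isDominant_apply_steinberg (w : V ≃ₗ[ℝ] V) : C.IsDominant (w (C.steinberg w)) :=
  C.apply_steinberg w ▸ C.isDominant_descentWeight w

/-- With `γ = -wα > 0`, the pairing `(e_w, α) = -(λ_w, γ)` vanishes only if `γ` is supported on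
simple roots outside the descent set, which would make `w⁻¹γ = -α` positive. -/
theorem inner_steinberg_neg {w : V ≃ₗ[ℝ] V} (hw : w ∈ C.W) {α : V} (hα : α ∈ C.invSet w) :
    ⟪C.steinberg w, α⟫_ℝ < 0 := by
  obtain ⟨hαΦ, hpos, hneg⟩ := C.mem_invSet.1 hα
  set γ := -(w α) with hγ_def
  have hγ : C.IsPos γ := hneg
  have hdom := C.isDominant_descentWeight w
  have hlam : ⟪C.steinberg w, α⟫_ℝ = -⟪C.descentWeight w, γ⟫_ℝ := by
    rw [← C.apply_steinberg, inner_neg_right, C.inner_invariant w hw, neg_neg]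
  rw [hlam, neg_lt_zero]
  refine lt_of_le_of_ne (C.inner_nonneg_of_isDominant_of_isPos hdom hγ)
    fun h0 => C.not_isNeg_of_isPos hαΦ hpos ?_
  have hterms := (Finset.sum_eq_zero_iff_of_nonneg fun j _ =>
    mul_nonneg ((C.isPos_iff γ).1 hγ j) (C.inner_π_nonneg_of_isDominant hdom j)).1
    ((C.inner_eq_sum_repr _ γ).symm.trans h0.symm)
  have hwγ : w⁻¹ γ = -α := by simp [hγ_def]
  rw [IsNeg, ← hwγ, ← C.sum_repr_smul_π γ, map_sum]
  refine C.isPos_sum _ _ fun j _ => ?_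
  rw [map_smul]
  by_cases hj : C.IsNeg (w⁻¹ (C.π j))
  · have hj_pos : 0 < ⟪C.descentWeight w, C.π j⟫_ℝ := by
      rw [C.inner_descentWeight_π, if_pos hj]
      exact half_pos (C.inner_self_pos_of_mem (C.simple_mem j))
    rw [(mul_eq_zero.1 (hterms j (Finset.mem_univ j))).resolve_right hj_pos.ne', zero_smul]
    exact C.isPos_zero
  · have hroot := C.apply_mem (inv_mem hw) (C.simple_mem j)
    exact C.isPos_smul ((C.isPos_or_isNeg hroot).resolve_right hj) ((C.isPos_iff γ).1 hγ j)

theorem invSet_subset_invSet_of_isDominant {w u : V ≃ₗ[ℝ] V} (hw : w ∈ C.W) (hu : u ∈ C.W)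
    (hdom : C.IsDominant (u (C.steinberg w))) : C.invSet w ⊆ C.invSet u := by
  intro α hα
  obtain ⟨hαΦ, hpos, -⟩ := C.mem_invSet.1 hα
  refine C.mem_invSet.2 ⟨hαΦ, hpos, (C.isPos_or_isNeg (C.apply_mem hu hαΦ)).resolve_left ?_⟩
  intro huα
  have := C.inner_nonneg_of_isDominant_of_isPos hdom huα
  rw [C.inner_invariant u hu] at this
  linarith [C.inner_steinberg_neg hw hα]

theorem length_le_of_isDominant {w u : V ≃ₗ[ℝ] V} (hw : w ∈ C.W) (hu : u ∈ C.W)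
    (hdom : C.IsDominant (u (C.steinberg w))) : C.length w ≤ C.length u := by
  rw [C.length_eq_card_invSet hw, C.length_eq_card_invSet hu]
  exact Finset.card_le_card (C.invSet_subset_invSet_of_isDominant hw hu hdom)

theorem eq_of_isDominant_of_length_eq {w u : V ≃ₗ[ℝ] V} (hw : w ∈ C.W) (hu : u ∈ C.W)
    (hdom : C.IsDominant (u (C.steinberg w))) (h : C.length u = C.length w) : u = w := by
  rw [C.length_eq_card_invSet hw, C.length_eq_card_invSet hu] at h
  have hsub := C.invSet_subset_invSet_of_isDominant hw hu hdom
  exact C.eq_of_invSet_eq hu hw (Finset.eq_of_subset_of_card_le hsub h.le).symm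

end Dominance

end RootSystemData

/-- For every `w ∈ W`, `w` is the unique element of minimal length in
`{u ∈ W : u ⬝ e_w is dominant}`.  In particular `v ↦ e_v` is injective on `W`. -/
theorem statement_9
    {V : Type} [NormedAddCommGroup V] [InnerProductSpace ℝ V] [FiniteDimensional ℝ V]
    (C : RootSystemData V) :
    (∀ w ∈ C.W,
      C.IsDominant (w (C.steinberg w)) ∧
      ∀ u ∈ C.W, C.IsDominant (u (C.steinberg w)) →
        C.length w ≤ C.length u ∧ (C.length u = C.length w → u = w)) ∧
    (∀ v ∈ C.W, ∀ w ∈ C.W, C.steinberg v = C.steinberg w → v = w) := by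
  refine ⟨fun w hw => ⟨C.isDominant_apply_steinberg w, fun u hu hdom =>
    ⟨C.length_le_of_isDominant hw hu hdom, C.eq_of_isDominant_of_length_eq hw hu hdom⟩⟩,
    fun v hv w hw h => ?_⟩
  have hv_dom : C.IsDominant (v (C.steinberg w)) := h ▸ C.isDominant_apply_steinberg v
  have hw_dom : C.IsDominant (w (C.steinberg v)) := h ▸ C.isDominant_apply_steinberg w
  exact C.eq_of_isDominant_of_length_eq hw hv hv_dom
    (le_antisymm (C.length_le_of_isDominant hv hw hw_dom) (C.length_le_of_isDominant hw hv hv_dom))
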